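/- arXiv:2207.06834 — 3 statements merged into one kernel-verified Lean document; each statement's English description precedes it below -/
import Mathlib

section
/- A connected graph G has an outer multiset resolving set of minimum cardinality formed by two adjacent vertices if and only if G belongs to the family F: that is, there exist integers r ≥ 0 and s ≥ 1 such that V(G) = {u_0,...,u_r} ∪ {v_0,...,v_s}, the edges u_0v_0 and u_0v_1 are in E(G), for every i ∈ {1,...,r} the edge u_{i-1}u_i is in E(G), for every j ∈ {1,...,s} the edge v_{j-1}v_j is in E(G), and the only other edges of G (each of which may be present or absent) are of the form u_iv_i for i ∈ {1,...,min{r,s}} and u_iv_{i+1} for i ∈ {1,...,min{r,s-1}}. -/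
open SimpleGraph

/-- The multiset representation of `u` with respect to `S`: the multiset of
distances from `u` to the vertices of `S`, counted with multiplicity. -/
noncomputable def mrep {V : Type*} (G : SimpleGraph V) (u : V) (S : Finset V) : Multiset ℕ :=
  S.val.map fun w => G.dist u w

/-- `S` is an outer multiset resolving set of `G`: the multiset representations of
the vertices outside `S` are pairwise distinct. -/
def IsOMR {V : Type*} (G : SimpleGraph V) (S : Finset V) : Prop :=
  ∀ u ∉ S, ∀ v ∉ S, mrep G u S = mrep G v S → u = v

/-- The outer multiset dimension of `G`. -/
noncomputable def dimMS {V : Type*} (G : SimpleGraph V) [Fintype V] : ℕ :=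
  sInf {n | ∃ S : Finset V, S.card = n ∧ IsOMR G S}

/-- The diameter of `G`: the largest distance between vertices of `G`. -/
noncomputable def gdiam {V : Type*} (G : SimpleGraph V) [Fintype V] : ℕ :=
  Finset.univ.sup fun p : V × V => G.dist p.1 p.2

/-- The pairs of indices that are allowed to form an edge in a graph of the family `F`:
consecutive `u`-vertices, consecutive `v`-vertices, the obligatory edges `u₀v₀`, `u₀v₁`,
and the optional edges `uᵢvᵢ` (`i ≥ 1`) and `uᵢv_{i+1}` (`i ≥ 1`). -/
def allowedPair {r s : ℕ} : (Fin (r + 1) ⊕ Fin (s + 2)) → (Fin (r + 1) ⊕ Fin (s + 2)) → Prop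
  | .inl i, .inl i' => (i : ℕ) + 1 = i' ∨ (i' : ℕ) + 1 = i
  | .inr j, .inr j' => (j : ℕ) + 1 = j' ∨ (j' : ℕ) + 1 = j
  | .inl i, .inr j =>
      ((i : ℕ) = 0 ∧ (j : ℕ) ≤ 1) ∨ ((j : ℕ) = i ∧ 1 ≤ (i : ℕ)) ∨
        ((j : ℕ) = i + 1 ∧ 1 ≤ (i : ℕ))
  | .inr j, .inl i =>
      ((i : ℕ) = 0 ∧ (j : ℕ) ≤ 1) ∨ ((j : ℕ) = i ∧ 1 ≤ (i : ℕ)) ∨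
        ((j : ℕ) = i + 1 ∧ 1 ≤ (i : ℕ))

/-- `G` belongs to the family `F`: the vertices can be labelled
`u₀, …, u_r, v₀, …, v_s` (with `r ≥ 0`, `s ≥ 1`; here `s = s' + 1`) so that the edges
`u₀v₀`, `u₀v₁`, `u_{i-1}uᵢ`, `v_{j-1}vⱼ` are present, and every edge of `G` is among
these or the optional ones `uᵢvᵢ`, `uᵢv_{i+1}` with `i ≥ 1`. -/
def InFamilyF {V : Type*} (G : SimpleGraph V) : Prop :=
  ∃ (r s' : ℕ) (g : (Fin (r + 1) ⊕ Fin (s' + 2)) ≃ V),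
    G.Adj (g (.inl ⟨0, by omega⟩)) (g (.inr ⟨0, by omega⟩)) ∧
    G.Adj (g (.inl ⟨0, by omega⟩)) (g (.inr ⟨1, by omega⟩)) ∧
    (∀ i : Fin r, G.Adj (g (.inl i.castSucc)) (g (.inl i.succ))) ∧
    (∀ j : Fin (s' + 1), G.Adj (g (.inr j.castSucc)) (g (.inr j.succ))) ∧
    (∀ x y, G.Adj (g x) (g y) → allowedPair x y)


lemma mrep_pair {V : Type*} [DecidableEq V] (G : SimpleGraph V) (w u v : V) (huv : u ≠ v) :
    mrep G w {u, v} = {G.dist w u, G.dist w v} := by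
  simp [mrep, Finset.insert_val_of_notMem (by simp [huv] : u ∉ ({v} : Finset V))]

lemma mrep_singleton {V : Type*} [DecidableEq V] (G : SimpleGraph V) (w u : V) :
    mrep G w {u} = {G.dist w u} := by simp [mrep]

lemma multiset_pair_eq {a b c d : ℕ} (h : ({a, b} : Multiset ℕ) = {c, d}) :
    (a = c ∧ b = d) ∨ (a = d ∧ b = c) := by
  simp only [Multiset.insert_eq_cons] at h
  rcases Multiset.cons_eq_cons.mp h with ⟨rfl, h2⟩ | ⟨hne, cs, h1, h2⟩
  · left; exact ⟨rfl, by simpa using h2⟩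
  · rw [Multiset.singleton_eq_cons_iff] at h1
    obtain ⟨rfl, rfl⟩ := h1
    right
    simp only [Multiset.cons_zero, Multiset.singleton_inj] at h2
    exact ⟨h2.symm, rfl⟩

lemma lip_walk {V : Type*} {G : SimpleGraph V} (f : V → ℕ)
    (hf : ∀ x y : V, G.Adj x y → f x ≤ f y + 1) {x y : V} (p : G.Walk x y) :
    f x ≤ f y + p.length := by
  induction p with
  | nil => simp
  | cons h p ih =>
      simp only [SimpleGraph.Walk.length_cons]
      have := hf _ _ h
      omega

lemma lip_dist {V : Type*} {G : SimpleGraph V} (hconn : G.Connected) (f : V → ℕ)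
    (hf : ∀ x y : V, G.Adj x y → f x ≤ f y + 1) (x y : V) : f x ≤ f y + G.dist x y := by
  obtain ⟨p, hp⟩ := hconn.exists_walk_length_eq_dist x y
  simpa [hp] using lip_walk f hf p

lemma exists_adj_dist_lt {V : Type*} {G : SimpleGraph V} (hconn : G.Connected) {x u : V}
    (h : x ≠ u) : ∃ y, G.Adj x y ∧ G.dist y u + 1 = G.dist x u := by
  obtain ⟨p, hp⟩ := hconn.exists_walk_length_eq_dist x u
  cases p with
  | nil => exact absurd rfl h
  | @cons _ y _ hadj q =>
      refine ⟨y, hadj, ?_⟩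
      have h1 : G.dist y u ≤ q.length := SimpleGraph.dist_le q
      have h2 : G.dist x u ≤ G.dist x y + G.dist y u := hconn.dist_triangle
      have h3 : G.dist x y = 1 := SimpleGraph.dist_eq_one_iff_adj.mpr hadj
      simp only [SimpleGraph.Walk.length_cons] at hp
      omega

section steps
variable {V : Type*} {G : SimpleGraph V} {a b : V}

/-- descend a skew-towards-`a` vertex one level. -/
lemma skew_step (hconn : G.Connected) (hab : G.Adj a b) {w : V}
    (hw : G.dist w b = G.dist w a + 1) (hne : w ≠ a) :
    ∃ y, G.Adj w y ∧ G.dist y b = G.dist y a + 1 ∧ G.dist y a + 1 = G.dist w a := by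
  obtain ⟨y, hadj, hy⟩ := exists_adj_dist_lt hconn hne
  have h1 : G.dist w b ≤ G.dist w y + G.dist y b := hconn.dist_triangle
  have h2 : G.dist y b ≤ G.dist y a + G.dist a b := hconn.dist_triangle
  have h3 : G.dist w y = 1 := SimpleGraph.dist_eq_one_iff_adj.mpr hadj
  have h4 : G.dist a b = 1 := SimpleGraph.dist_eq_one_iff_adj.mpr hab
  exact ⟨y, hadj, by omega, hy⟩

lemma skew_chain (hconn : G.Connected) (hab : G.Adj a b) :
    ∀ k, ∀ w, G.dist w b = G.dist w a + 1 → G.dist w a = k →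
      ∀ j, j ≤ k → ∃ y, G.dist y b = G.dist y a + 1 ∧ G.dist y a = j := by
  intro k
  induction k with
  | zero => intro w hw hk j hj; exact ⟨w, hw, by omega⟩
  | succ k ih =>
      intro w hw hk j hj
      rcases Nat.eq_or_lt_of_le hj with rfl | hlt
      · exact ⟨w, hw, hk⟩
      · have hne : w ≠ a := by
          intro h; rw [h, SimpleGraph.dist_self] at hk; omega
        obtain ⟨y, _, hy1, hy2⟩ := skew_step hconn hab hw hne
        exact ih y hy1 (by omega) j (by omega)

/-- descend an equal vertex one level (needs: no skew-towards-`b` vertices). -/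
lemma eq_step (hconn : G.Connected) (hab : G.Adj a b)
    (hsk : ∀ y : V, y ≠ b → G.dist y a ≠ G.dist y b + 1) {w : V}
    (hw : G.dist w a = G.dist w b) (h1 : 2 ≤ G.dist w b) :
    ∃ y, G.Adj w y ∧ G.dist y a = G.dist y b ∧ G.dist y b + 1 = G.dist w b := by
  have hneb : w ≠ b := by intro h; rw [h, SimpleGraph.dist_self] at h1; omega
  obtain ⟨y, hadj, hy⟩ := exists_adj_dist_lt hconn hneb
  have h2 : G.dist w a ≤ G.dist w y + G.dist y a := hconn.dist_triangle
  have h3 : G.dist y a ≤ G.dist y b + G.dist b a := hconn.dist_triangle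
  have h4 : G.dist w y = 1 := SimpleGraph.dist_eq_one_iff_adj.mpr hadj
  have h5 : G.dist b a = 1 := SimpleGraph.dist_eq_one_iff_adj.mpr hab.symm
  have h6 : y ≠ b := by
    intro h; subst h; rw [SimpleGraph.dist_self] at hy; omega
  have h7 := hsk y h6
  exact ⟨y, hadj, by omega, hy⟩

lemma eq_chain (hconn : G.Connected) (hab : G.Adj a b)
    (hsk : ∀ y : V, y ≠ b → G.dist y a ≠ G.dist y b + 1) :
    ∀ k, ∀ w, G.dist w a = G.dist w b → G.dist w b = k →
      ∀ j, 1 ≤ j → j ≤ k → ∃ y, G.dist y a = G.dist y b ∧ G.dist y b = j := by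
  intro k
  induction k with
  | zero => intro w hw hk j hj1 hj2; omega
  | succ k ih =>
      intro w hw hk j hj1 hj2
      rcases Nat.eq_or_lt_of_le hj2 with rfl | hlt
      · exact ⟨w, hw, hk⟩
      · obtain ⟨y, _, hy1, hy2⟩ := eq_step hconn hab hsk hw (by omega)
        exact ih y hy1 (by omega) j hj1 (by omega)

end steps

lemma orient {V : Type*} [Fintype V] [DecidableEq V] {G : SimpleGraph V} (hconn : G.Connected)
    {a b : V} (hadj : G.Adj a b) (homr : IsOMR G {a, b})
    {p q : V} (hp : G.dist p b = G.dist p a + 1) (hpa : p ≠ a)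
    (hq : G.dist q a = G.dist q b + 1) (hqb : q ≠ b) : False := by
  have hab : a ≠ b := hadj.ne
  have hp1 : 1 ≤ G.dist p a := hconn.pos_dist_of_ne hpa
  have hq1 : 1 ≤ G.dist q b := hconn.pos_dist_of_ne hqb
  obtain ⟨p', hp'1, hp'2⟩ := skew_chain hconn hadj (G.dist p a) p hp rfl 1 hp1
  obtain ⟨q', hq'1, hq'2⟩ := skew_chain hconn hadj.symm (G.dist q b) q hq rfl 1 hq1
  have hb1 : G.dist p' b = 2 := by omega
  have ha1 : G.dist q' a = 2 := by omega
  have hza : ∀ w : V, G.dist w a = 0 ↔ w = a := fun w => hconn.dist_eq_zero_iff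
  have hzb : ∀ w : V, G.dist w b = 0 ↔ w = b := fun w => hconn.dist_eq_zero_iff
  have hmem : ∀ w : V, w ≠ a → w ≠ b → w ∉ ({a, b} : Finset V) := by
    intro w h1 h2; simp [h1, h2]
  have hp'mem : p' ∉ ({a, b} : Finset V) :=
    hmem p' (fun he => by rw [he, SimpleGraph.dist_self] at hp'2; omega)
      (fun he => by rw [he, SimpleGraph.dist_self] at hb1; omega)
  have hq'mem : q' ∉ ({a, b} : Finset V) :=
    hmem q' (fun he => by rw [he, SimpleGraph.dist_self] at ha1; omega)
      (fun he => by rw [he, SimpleGraph.dist_self] at hq'2; omega)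
  have : p' = q' := by
    apply homr p' hp'mem q' hq'mem
    rw [mrep_pair G p' a b hab, mrep_pair G q' a b hab, hp'2, hb1, ha1, hq'2]
    decide
  rw [this] at hp'2
  omega


lemma forward_main {V : Type*} [Fintype V] [DecidableEq V] {G : SimpleGraph V}
    (hconn : G.Connected) {a b : V} (hadj : G.Adj a b) (homr : IsOMR G {a, b})
    (hns : ∀ w : V, ¬ IsOMR G {w})
    (hsk : ∀ w : V, w ≠ b → G.dist w a ≠ G.dist w b + 1) :
    InFamilyF G := by
  classical
  have hab : a ≠ b := hadj.ne
  have hd_ab : G.dist a b = 1 := SimpleGraph.dist_eq_one_iff_adj.mpr hadj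
  have hd_aa : G.dist a a = 0 := SimpleGraph.dist_self
  have hd_bb : G.dist b b = 0 := SimpleGraph.dist_self
  have hd_ba : G.dist b a = 1 := SimpleGraph.dist_eq_one_iff_adj.mpr hadj.symm
  have tri1 : ∀ w : V, G.dist w a ≤ G.dist w b + 1 := fun w => by
    have := hconn.dist_triangle (u := w) (v := b) (w := a); omega
  have tri2 : ∀ w : V, G.dist w b ≤ G.dist w a + 1 := fun w => by
    have := hconn.dist_triangle (u := w) (v := a) (w := b); omega
  have hza : ∀ w : V, G.dist w a = 0 ↔ w = a := fun w => hconn.dist_eq_zero_iff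
  have hzb : ∀ w : V, G.dist w b = 0 ↔ w = b := fun w => hconn.dist_eq_zero_iff
  have trich : ∀ w : V, w ≠ b → G.dist w b = G.dist w a + 1 ∨ G.dist w a = G.dist w b := by
    intro w hw; have := hsk w hw; have := tri1 w; have := tri2 w; omega
  have hmem : ∀ w : V, w ≠ a → w ≠ b → w ∉ ({a, b} : Finset V) := by
    intro w h1 h2; simp [h1, h2]
  -- uniqueness of skew vertices per level
  have uSkew : ∀ w w' : V, G.dist w b = G.dist w a + 1 → G.dist w' b = G.dist w' a + 1 →
      G.dist w a = G.dist w' a → w = w' := by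
    intro w w' hw hw' h
    by_cases h0 : G.dist w a = 0
    · rw [(hza w).mp h0, (hza w').mp (by omega)]
    · have hwa : w ≠ a := fun he => h0 ((hza w).mpr he)
      have hw'a : w' ≠ a := fun he => by rw [he] at h; omega
      have hwb : w ≠ b := fun he => by rw [he] at hw; omega
      have hw'b : w' ≠ b := fun he => by rw [he] at hw'; omega
      apply homr w (hmem w hwa hwb) w' (hmem w' hw'a hw'b)
      rw [mrep_pair G w a b hab, mrep_pair G w' a b hab, hw, hw', h]
  have uEq : ∀ w w' : V, G.dist w a = G.dist w b → G.dist w' a = G.dist w' b →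
      G.dist w a = G.dist w' a → w = w' := by
    intro w w' hw hw' h
    have hwa : w ≠ a := fun he => by rw [he] at hw; omega
    have hw'a : w' ≠ a := fun he => by rw [he] at hw'; omega
    have hwb : w ≠ b := fun he => by rw [he] at hw; omega
    have hw'b : w' ≠ b := fun he => by rw [he] at hw'; omega
    apply homr w (hmem w hwa hwb) w' (hmem w' hw'a hw'b)
    rw [mrep_pair G w a b hab, mrep_pair G w' a b hab, ← hw, ← hw', h]
  -- existence of an "equal" vertex
  have hE : ∃ w : V, G.dist w a = G.dist w b := by
    by_contra hno
    push_neg at hno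
    apply hns b
    intro w hw w' hw' hm
    rw [mrep_singleton, mrep_singleton] at hm
    have hm' : G.dist w b = G.dist w' b := by simpa using hm
    have hwb : w ≠ b := by simpa using hw
    have hw'b : w' ≠ b := by simpa using hw'
    rcases trich w hwb with h1 | h1
    · rcases trich w' hw'b with h2 | h2
      · exact uSkew w w' h1 h2 (by omega)
      · exact absurd h2 (hno w')
    · exact absurd h1 (hno w)
  have hE1 : ∃ w : V, G.dist w a = G.dist w b ∧ G.dist w b = 1 := by
    obtain ⟨w, hw⟩ := hE
    have h1 : G.dist w b ≠ 0 := fun h0 => by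
      have := (hzb w).mp h0; rw [this] at hw; omega
    exact eq_chain hconn hadj hsk (G.dist w b) w hw rfl 1 le_rfl (by omega)
  -- the two parameters
  set r : ℕ := (Finset.univ.filter (fun w : V => G.dist w b = G.dist w a + 1)).sup
      (fun w => G.dist w a) with hr_def
  set s : ℕ := (Finset.univ.filter (fun w : V => G.dist w a = G.dist w b)).sup
      (fun w => G.dist w a) with hs_def
  have ha_mem : a ∈ Finset.univ.filter (fun w : V => G.dist w b = G.dist w a + 1) := by
    simp [hd_ab, hd_aa]
  have skew_le : ∀ w : V, G.dist w b = G.dist w a + 1 → G.dist w a ≤ r := by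
    intro w hw
    have hm : w ∈ Finset.univ.filter (fun w : V => G.dist w b = G.dist w a + 1) := by
      simp [hw]
    exact Finset.le_sup (f := fun w : V => G.dist w a) hm
  have eq_le : ∀ w : V, G.dist w a = G.dist w b → G.dist w a ≤ s := by
    intro w hw
    have hm : w ∈ Finset.univ.filter (fun w : V => G.dist w a = G.dist w b) := by
      simp [hw]
    exact Finset.le_sup (f := fun w : V => G.dist w a) hm
  have hs1 : 1 ≤ s := by
    obtain ⟨w, hw1, hw2⟩ := hE1
    have := eq_le w hw1; omega
  obtain ⟨wr, hwr_mem, hwr⟩ := Finset.exists_mem_eq_sup _ ⟨a, ha_mem⟩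
    (fun w : V => G.dist w a)
  rw [Finset.mem_filter] at hwr_mem
  have skewAt : ∀ i, i ≤ r → ∃ w : V, G.dist w b = G.dist w a + 1 ∧ G.dist w a = i := by
    intro i hi
    exact skew_chain hconn hadj (G.dist wr a) wr hwr_mem.2 rfl i (by omega)
  obtain ⟨ws, hws_mem, hws⟩ := Finset.exists_mem_eq_sup
    (Finset.univ.filter (fun w : V => G.dist w a = G.dist w b))
    (by obtain ⟨w, hw1, _⟩ := hE1; exact ⟨w, by simp [hw1]⟩)
    (fun w : V => G.dist w a)
  rw [Finset.mem_filter] at hws_mem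
  have eqAt : ∀ j, 1 ≤ j → j ≤ s → ∃ w : V, G.dist w a = G.dist w b ∧ G.dist w a = j := by
    intro j hj1 hj2
    obtain ⟨y, hy1, hy2⟩ := eq_chain hconn hadj hsk (G.dist ws b) ws hws_mem.2 rfl j hj1
      (by rw [← hws_mem.2]; omega)
    exact ⟨y, hy1, by omega⟩
  -- canonical vertices
  set U : ℕ → V := fun i => if h : i ≤ r then (skewAt i h).choose else a with hU_def
  have hUspec : ∀ i, i ≤ r → G.dist (U i) b = G.dist (U i) a + 1 ∧ G.dist (U i) a = i := by
    intro i h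
    simp only [hU_def, dif_pos h]
    exact (skewAt i h).choose_spec
  set W : ℕ → V := fun j => if h : 1 ≤ j ∧ j ≤ s then (eqAt j h.1 h.2).choose else b with hW_def
  have hWspec : ∀ j, 1 ≤ j → j ≤ s → G.dist (W j) a = G.dist (W j) b ∧ G.dist (W j) a = j := by
    intro j h1 h2
    simp only [hW_def, dif_pos (⟨h1, h2⟩ : 1 ≤ j ∧ j ≤ s)]
    exact (eqAt j h1 h2).choose_spec
  have hU0 : U 0 = a := by
    have h := hUspec 0 (Nat.zero_le r)
    exact uSkew (U 0) a h.1 (by omega) (by omega)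
  clear_value r s
  clear hr_def hs_def hwr hws hwr_mem hws_mem ha_mem
  obtain ⟨s', hs'⟩ : ∃ s', s = s' + 1 := ⟨s - 1, by omega⟩
  set f : (Fin (r + 1) ⊕ Fin (s' + 2)) → V := fun x =>
    match x with
    | .inl i => U i
    | .inr j => if (j : ℕ) = 0 then b else W j with hf_def
  have hfl : ∀ i : Fin (r + 1), f (.inl i) = U i := fun i => rfl
  have hfr' : ∀ j : Fin (s' + 2), f (.inr j) = if (j : ℕ) = 0 then b else W j := fun j => rfl
  have hfr0 : ∀ j : Fin (s' + 2), (j : ℕ) = 0 → f (.inr j) = b := by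
    intro j hj; rw [hfr', if_pos hj]
  have hfr : ∀ j : Fin (s' + 2), (j : ℕ) ≠ 0 → f (.inr j) = W j := by
    intro j hj; rw [hfr', if_neg hj]
  have hUr : ∀ i : Fin (r + 1), (i : ℕ) ≤ r := fun i => by omega
  have hWr : ∀ j : Fin (s' + 2), (j : ℕ) ≤ s := fun j => by have := j.isLt; omega
  -- injectivity
  have hinj : Function.Injective f := by
    rintro (i | j) (i' | j') h
    · have h1 := hUspec i (hUr i)
      have h2 := hUspec i' (hUr i')
      simp only [hfl] at h
      rw [h] at h1
      exact congrArg Sum.inl (Fin.ext (by omega))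
    · exfalso
      have h1 := hUspec i (hUr i)
      by_cases hj : (j' : ℕ) = 0
      · rw [hfl, hfr0 j' hj] at h; rw [h] at h1; omega
      · have h2 := hWspec j' (by omega) (hWr j')
        rw [hfl, hfr j' hj] at h; rw [h] at h1; omega
    · exfalso
      have h1 := hUspec i' (hUr i')
      by_cases hj : (j : ℕ) = 0
      · rw [hfl, hfr0 j hj] at h; rw [← h] at h1; omega
      · have h2 := hWspec j (by omega) (hWr j)
        rw [hfl, hfr j hj] at h; rw [← h] at h1; omega
    · by_cases hj : (j : ℕ) = 0 <;> by_cases hj' : (j' : ℕ) = 0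
      · exact congrArg Sum.inr (Fin.ext (by omega))
      · exfalso
        have h2 := hWspec j' (by omega) (hWr j')
        rw [hfr0 j hj, hfr j' hj'] at h; rw [← h] at h2; omega
      · exfalso
        have h2 := hWspec j (by omega) (hWr j)
        rw [hfr0 j' hj', hfr j hj] at h; rw [h] at h2; omega
      · have h1 := hWspec j (by omega) (hWr j)
        have h2 := hWspec j' (by omega) (hWr j')
        rw [hfr j hj, hfr j' hj'] at h
        rw [h] at h1
        exact congrArg Sum.inr (Fin.ext (by omega))
  -- surjectivity
  have hsurj : Function.Surjective f := by
    intro w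
    by_cases hwb : w = b
    · exact ⟨.inr ⟨0, by omega⟩, by rw [hfr0 _ rfl, hwb]⟩
    · rcases trich w hwb with h1 | h1
      · have hle : G.dist w a ≤ r := skew_le w h1
        refine ⟨.inl ⟨G.dist w a, by omega⟩, ?_⟩
        rw [hfl]
        have h2 := hUspec (G.dist w a) hle
        exact uSkew _ w h2.1 h1 h2.2
      · have hle : G.dist w a ≤ s := eq_le w h1
        have hge : 1 ≤ G.dist w a := by
          rcases Nat.eq_zero_or_pos (G.dist w a) with h0 | h0
          · exfalso; rw [(hza w).mp h0] at h1; omega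
          · omega
        refine ⟨.inr ⟨G.dist w a, by omega⟩, ?_⟩
        rw [hfr _ (by simp only [Fin.val_mk]; omega)]
        have h2 := hWspec (G.dist w a) hge hle
        exact uEq _ w h2.1 h1 h2.2
  -- neighbour distance bounds
  have hnbr : ∀ w w' : V, G.Adj w w' →
      G.dist w a ≤ G.dist w' a + 1 ∧ G.dist w' a ≤ G.dist w a + 1 ∧
      G.dist w b ≤ G.dist w' b + 1 ∧ G.dist w' b ≤ G.dist w b + 1 := by
    intro w w' hadj'
    have h1 : G.dist w w' = 1 := SimpleGraph.dist_eq_one_iff_adj.mpr hadj'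
    have h2 : G.dist w' w = 1 := SimpleGraph.dist_eq_one_iff_adj.mpr hadj'.symm
    have t1 := hconn.dist_triangle (u := w) (v := w') (w := a)
    have t2 := hconn.dist_triangle (u := w') (v := w) (w := a)
    have t3 := hconn.dist_triangle (u := w) (v := w') (w := b)
    have t4 := hconn.dist_triangle (u := w') (v := w) (w := b)
    omega
  refine ⟨r, s', Equiv.ofBijective f ⟨hinj, hsurj⟩, ?_, ?_, ?_, ?_, ?_⟩
  · show G.Adj (f (.inl ⟨0, by omega⟩)) (f (.inr ⟨0, by omega⟩))
    rw [hfl, hfr0 _ rfl]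
    show G.Adj (U 0) b
    rw [hU0]; exact hadj
  · show G.Adj (f (.inl ⟨0, by omega⟩)) (f (.inr ⟨1, by omega⟩))
    rw [hfl, hfr _ (by simp)]
    show G.Adj (U 0) (W 1)
    rw [hU0]
    have h1 := hWspec 1 le_rfl (by omega)
    have : G.dist (W 1) a = 1 := by omega
    exact (SimpleGraph.dist_eq_one_iff_adj.mp this).symm
  · intro i
    show G.Adj (f (.inl i.castSucc)) (f (.inl i.succ))
    rw [hfl, hfl]
    have hc : ((i.castSucc : Fin (r + 1)) : ℕ) = (i : ℕ) := rfl
    have hsu : ((i.succ : Fin (r + 1)) : ℕ) = (i : ℕ) + 1 := rfl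
    rw [hc, hsu]
    have h1 := hUspec ((i : ℕ) + 1) (by omega)
    have hne : U ((i : ℕ) + 1) ≠ a := fun he => by rw [he] at h1; omega
    obtain ⟨y, hy_adj, hy1, hy2⟩ := skew_step hconn hadj h1.1 hne
    have h2 := hUspec (i : ℕ) (by omega)
    have : y = U (i : ℕ) := uSkew y _ hy1 h2.1 (by omega)
    rw [← this]
    exact hy_adj.symm
  · intro j
    show G.Adj (f (.inr j.castSucc)) (f (.inr j.succ))
    have hc : ((j.castSucc : Fin (s' + 2)) : ℕ) = (j : ℕ) := rfl
    have hsu : ((j.succ : Fin (s' + 2)) : ℕ) = (j : ℕ) + 1 := rfl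
    by_cases hj : (j : ℕ) = 0
    · rw [hfr0 _ (by rw [hc]; exact hj), hfr _ (by rw [hsu]; omega), hsu, hj]
      have h1 := hWspec 1 le_rfl (by omega)
      have hWb1 : G.dist (W 1) b = 1 := by omega
      exact (SimpleGraph.dist_eq_one_iff_adj.mp hWb1).symm
    · rw [hfr _ (by rw [hc]; exact hj), hfr _ (by rw [hsu]; omega), hc, hsu]
      have h1 := hWspec ((j : ℕ) + 1) (by omega) (by have := j.isLt; omega)
      obtain ⟨y, hy_adj, hy1, hy2⟩ := eq_step hconn hadj hsk h1.1 (by omega)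
      have h2 := hWspec (j : ℕ) (by omega) (by have := j.isLt; omega)
      have : y = W (j : ℕ) := uEq y _ hy1 h2.1 (by omega)
      rw [← this]
      exact hy_adj.symm
  · intro x y hxy
    have hadj0 : G.Adj (f x) (f y) := hxy
    clear hxy
    rcases x with i | j <;> rcases y with i' | j' <;> rename' hadj0 => hadj'
    · have h1 := hUspec i (hUr i)
      have h2 := hUspec i' (hUr i')
      have h3 := hnbr _ _ hadj'
      rw [hfl, hfl] at h3
      have hne : (i : ℕ) ≠ (i' : ℕ) := by
        intro he
        exact hadj'.ne (by rw [hfl, hfl, he])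
      simp only [allowedPair]
      omega
    · have h1 := hUspec i (hUr i)
      have h3 := hnbr _ _ hadj'
      rw [hfl] at h3
      simp only [allowedPair]
      by_cases hj : (j' : ℕ) = 0
      · rw [hfr0 j' hj] at h3; omega
      · have h2 := hWspec j' (by omega) (hWr j')
        rw [hfr j' hj] at h3; omega
    · have h1 := hUspec i' (hUr i')
      have h3 := hnbr _ _ hadj'
      rw [hfl] at h3
      simp only [allowedPair]
      by_cases hj : (j : ℕ) = 0
      · rw [hfr0 j hj] at h3; omega
      · have h2 := hWspec j (by omega) (hWr j)
        rw [hfr j hj] at h3; omega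
    · have h3 := hnbr _ _ hadj'
      have hne : (j : ℕ) ≠ (j' : ℕ) := by
        intro he
        exact hadj'.ne (by
          have : j = j' := Fin.ext he
          rw [this])
      simp only [allowedPair]
      by_cases hj : (j : ℕ) = 0 <;> by_cases hj' : (j' : ℕ) = 0
      · omega
      · have h2 := hWspec j' (by omega) (hWr j')
        rw [hfr0 j hj, hfr j' hj'] at h3
        omega
      · have h2 := hWspec j (by omega) (hWr j)
        rw [hfr j hj, hfr0 j' hj'] at h3
        omega
      · have h1 := hWspec j (by omega) (hWr j)
        have h2 := hWspec j' (by omega) (hWr j')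
        rw [hfr j hj, hfr j' hj'] at h3
        omega

lemma backward_main {V : Type*} [Fintype V] [DecidableEq V] {G : SimpleGraph V}
    (hconn : G.Connected) (hF : InFamilyF G) :
    ∃ u v : V, G.Adj u v ∧ IsOMR G {u, v} ∧ ({u, v} : Finset V).card = dimMS G := by
  classical
  obtain ⟨r, s', g, h01, h02, hUadj, hVadj, hall⟩ := hF
  set u0 : V := g (.inl ⟨0, by omega⟩) with hu0
  set v0 : V := g (.inr ⟨0, by omega⟩) with hv0
  set v1 : V := g (.inr ⟨1, by omega⟩) with hv1
  set UU : ℕ → V := fun n => if h : n < r + 1 then g (.inl ⟨n, h⟩) else u0 with hUU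
  set VV : ℕ → V := fun n => if h : n < s' + 2 then g (.inr ⟨n, h⟩) else v0 with hVV
  have hUUeq : ∀ n (h : n < r + 1), UU n = g (.inl ⟨n, h⟩) := fun n h => by
    simp only [hUU, dif_pos h]
  have hVVeq : ∀ n (h : n < s' + 2), VV n = g (.inr ⟨n, h⟩) := fun n h => by
    simp only [hVV, dif_pos h]
  have hUU0 : UU 0 = u0 := hUUeq 0 (by omega)
  have hVV0 : VV 0 = v0 := hVVeq 0 (by omega)
  have hVV1 : VV 1 = v1 := hVVeq 1 (by omega)
  -- injectivity helpers
  have hUUinj : ∀ n (h : n < r + 1) m (hm : m < r + 1), UU n = UU m → n = m := by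
    intro n h m hm he
    rw [hUUeq n h, hUUeq m hm] at he
    have := g.injective he
    simpa using congrArg (fun x => Sum.elim (fun i : Fin (r+1) => (i : ℕ)) (fun j : Fin (s'+2) => (j : ℕ)) x) this
  have hVVinj : ∀ n (h : n < s' + 2) m (hm : m < s' + 2), VV n = VV m → n = m := by
    intro n h m hm he
    rw [hVVeq n h, hVVeq m hm] at he
    have := g.injective he
    simpa using congrArg (fun x => Sum.elim (fun i : Fin (r+1) => (i : ℕ)) (fun j : Fin (s'+2) => (j : ℕ)) x) this
  have hUVne : ∀ n (h : n < r + 1) m (hm : m < s' + 2), UU n ≠ VV m := by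
    intro n h m hm he
    rw [hUUeq n h, hVVeq m hm] at he
    have := g.injective he
    simp at this
  -- Lipschitz potentials
  set φ : V → ℕ := fun w =>
    Sum.elim (fun i : Fin (r+1) => (i : ℕ)) (fun j : Fin (s'+2) => (j : ℕ)) (g.symm w) with hφ
  set ψ : V → ℕ := fun w =>
    Sum.elim (fun i : Fin (r+1) => (i : ℕ) + 1) (fun j : Fin (s'+2) => (j : ℕ)) (g.symm w) with hψ
  have hφlip : ∀ x y : V, G.Adj x y → φ x ≤ φ y + 1 := by
    intro x y hxy
    obtain ⟨p, rfl⟩ : ∃ p, g p = x := ⟨g.symm x, g.apply_symm_apply x⟩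
    obtain ⟨q, rfl⟩ : ∃ q, g q = y := ⟨g.symm y, g.apply_symm_apply y⟩
    have h := hall p q hxy
    simp only [hφ, Equiv.symm_apply_apply]
    rcases p with i | j <;> rcases q with i' | j' <;>
      simp only [allowedPair, Sum.elim_inl, Sum.elim_inr] at h ⊢ <;> omega
  have hψlip : ∀ x y : V, G.Adj x y → ψ x ≤ ψ y + 1 := by
    intro x y hxy
    obtain ⟨p, rfl⟩ : ∃ p, g p = x := ⟨g.symm x, g.apply_symm_apply x⟩
    obtain ⟨q, rfl⟩ : ∃ q, g q = y := ⟨g.symm y, g.apply_symm_apply y⟩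
    have h := hall p q hxy
    simp only [hψ, Equiv.symm_apply_apply]
    rcases p with i | j <;> rcases q with i' | j' <;>
      simp only [allowedPair, Sum.elim_inl, Sum.elim_inr] at h ⊢ <;> omega
  have hφU : ∀ n (h : n < r + 1), φ (UU n) = n := by
    intro n h
    rw [hUUeq n h]
    simp [hφ, Equiv.symm_apply_apply]
  have hφV : ∀ n (h : n < s' + 2), φ (VV n) = n := by
    intro n h
    rw [hVVeq n h]
    simp [hφ, Equiv.symm_apply_apply]
  have hψU : ∀ n (h : n < r + 1), ψ (UU n) = n + 1 := by
    intro n h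
    rw [hUUeq n h]
    simp [hψ, Equiv.symm_apply_apply]
  have hψV : ∀ n (h : n < s' + 2), ψ (VV n) = n := by
    intro n h
    rw [hVVeq n h]
    simp [hψ, Equiv.symm_apply_apply]
  -- adjacency along chains
  have adjUU : ∀ n, (h : n + 1 < r + 1) → G.Adj (UU n) (UU (n + 1)) := by
    intro n h
    rw [hUUeq n (by omega), hUUeq (n+1) h]
    exact hUadj ⟨n, by omega⟩
  have adjVV : ∀ n, (h : n + 1 < s' + 2) → G.Adj (VV n) (VV (n + 1)) := by
    intro n h
    rw [hVVeq n (by omega), hVVeq (n+1) h]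
    exact hVadj ⟨n, by omega⟩
  have adj01 : G.Adj u0 v0 := h01
  have adj0v1 : G.Adj u0 v1 := h02
  -- distance computations
  have dUu : ∀ n, n < r + 1 → G.dist (UU n) u0 = n := by
    intro n
    induction n with
    | zero =>
        intro h
        rw [hUU0]
        exact SimpleGraph.dist_self
    | succ n ih =>
        intro h
        have hub : G.dist (UU (n+1)) u0 ≤ n + 1 := by
          have t := hconn.dist_triangle (u := UU (n+1)) (v := UU n) (w := u0)
          have e : G.dist (UU (n+1)) (UU n) = 1 :=
            SimpleGraph.dist_eq_one_iff_adj.mpr (adjUU n h).symm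
          have := ih (by omega)
          omega
        have hlb := lip_dist hconn φ hφlip (UU (n+1)) u0
        rw [hφU (n+1) h, ← hUU0, hφU 0 (by omega), hUU0] at hlb
        omega
  have dVv : ∀ n, n < s' + 2 → G.dist (VV n) v0 = n := by
    intro n
    induction n with
    | zero =>
        intro h
        rw [hVV0]
        exact SimpleGraph.dist_self
    | succ n ih =>
        intro h
        have hub : G.dist (VV (n+1)) v0 ≤ n + 1 := by
          have t := hconn.dist_triangle (u := VV (n+1)) (v := VV n) (w := v0)
          have e : G.dist (VV (n+1)) (VV n) = 1 :=
            SimpleGraph.dist_eq_one_iff_adj.mpr (adjVV n h).symm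
          have := ih (by omega)
          omega
        have hlb := lip_dist hconn φ hφlip (VV (n+1)) v0
        rw [hφV (n+1) h, ← hVV0, hφV 0 (by omega), hVV0] at hlb
        omega
  have dUv : ∀ n, n < r + 1 → G.dist (UU n) v0 = n + 1 := by
    intro n h
    have hub : G.dist (UU n) v0 ≤ n + 1 := by
      have t := hconn.dist_triangle (u := UU n) (v := u0) (w := v0)
      have e : G.dist u0 v0 = 1 := SimpleGraph.dist_eq_one_iff_adj.mpr adj01
      have := dUu n h
      omega
    have hlb := lip_dist hconn ψ hψlip (UU n) v0
    rw [hψU n h, ← hVV0, hψV 0 (by omega), hVV0] at hlb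
    omega
  have dVu : ∀ n, n < s' + 2 → 1 ≤ n → G.dist (VV n) u0 = n := by
    intro n
    induction n with
    | zero => intro _ h1; omega
    | succ n ih =>
        intro h _
        have hub : G.dist (VV (n+1)) u0 ≤ n + 1 := by
          rcases Nat.eq_zero_or_pos n with rfl | hn
          · rw [hVV1]
            have e : G.dist u0 v1 = 1 := SimpleGraph.dist_eq_one_iff_adj.mpr adj0v1
            rw [SimpleGraph.dist_comm]
            omega
          · have t := hconn.dist_triangle (u := VV (n+1)) (v := VV n) (w := u0)
            have e : G.dist (VV (n+1)) (VV n) = 1 :=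
              SimpleGraph.dist_eq_one_iff_adj.mpr (adjVV n h).symm
            have := ih (by omega) hn
            omega
        have hlb := lip_dist hconn φ hφlip (VV (n+1)) u0
        rw [hφV (n+1) h, ← hUU0, hφU 0 (by omega), hUU0] at hlb
        omega
  have dUv1 : ∀ n, n < r + 1 → 1 ≤ n →
      n ≤ G.dist (UU n) v1 ∧ G.dist (UU n) v1 ≤ n + 1 := by
    intro n h h1
    constructor
    · have hlb := lip_dist hconn ψ hψlip (UU n) v1
      rw [hψU n h, ← hVV1, hψV 1 (by omega), hVV1] at hlb
      omega
    · have t := hconn.dist_triangle (u := UU n) (v := u0) (w := v1)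
      have e : G.dist u0 v1 = 1 := SimpleGraph.dist_eq_one_iff_adj.mpr adj0v1
      have := dUu n h
      omega
  have hne01 : u0 ≠ v0 := by
    rw [← hUU0, ← hVV0]
    exact hUVne 0 (by omega) 0 (by omega)
  have hne0v1 : u0 ≠ v1 := by
    rw [← hUU0, ← hVV1]
    exact hUVne 0 (by omega) 1 (by omega)
  have hnev01 : v0 ≠ v1 := by
    rw [← hVV0, ← hVV1]
    intro he
    have := hVVinj 0 (by omega) 1 (by omega) he
    omega
  -- classification of vertices outside {u0, v0}
  have classify : ∀ w : V, w ≠ u0 → w ≠ v0 →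
      ∃ n, 1 ≤ n ∧ ((n < r + 1 ∧ w = UU n) ∨ (n < s' + 2 ∧ w = VV n)) := by
    intro w hwu hwv
    obtain ⟨x, rfl⟩ : ∃ x, g x = w := ⟨g.symm w, g.apply_symm_apply w⟩
    rcases x with i | j
    · refine ⟨(i : ℕ), ?_, Or.inl ⟨i.isLt, (hUUeq (i : ℕ) i.isLt).symm⟩⟩
      rcases Nat.eq_zero_or_pos (i : ℕ) with h0 | h0
      · exact absurd (by rw [hu0]; exact congrArg g (congrArg Sum.inl (Fin.ext h0)) : g (Sum.inl i) = u0) hwu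
      · omega
    · refine ⟨(j : ℕ), ?_, Or.inr ⟨j.isLt, (hVVeq (j : ℕ) j.isLt).symm⟩⟩
      rcases Nat.eq_zero_or_pos (j : ℕ) with h0 | h0
      · exact absurd (by rw [hv0]; exact congrArg g (congrArg Sum.inr (Fin.ext h0)) : g (Sum.inr j) = v0) hwv
      · omega
  -- S = {u0, v0} is an OMR set
  have homrS : IsOMR G {u0, v0} := by
    intro w hw w' hw' hm
    have hwu : w ≠ u0 := by intro he; apply hw; simp [he]
    have hwv : w ≠ v0 := by intro he; apply hw; simp [he]
    have hw'u : w' ≠ u0 := by intro he; apply hw'; simp [he]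
    have hw'v : w' ≠ v0 := by intro he; apply hw'; simp [he]
    rw [mrep_pair G w u0 v0 hne01, mrep_pair G w' u0 v0 hne01] at hm
    obtain ⟨n, hn1, hn⟩ := classify w hwu hwv
    obtain ⟨m, hm1, hmc⟩ := classify w' hw'u hw'v
    rcases hn with ⟨hnr, rfl⟩ | ⟨hns, rfl⟩ <;> rcases hmc with ⟨hmr, rfl⟩ | ⟨hms, rfl⟩
    · rw [dUu n hnr, dUv n hnr, dUu m hmr, dUv m hmr] at hm
      rcases multiset_pair_eq hm with ⟨h1, _⟩ | ⟨h1, h2⟩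
      · rw [h1]
      · omega
    · rw [dUu n hnr, dUv n hnr, dVu m hms hm1, dVv m hms] at hm
      rcases multiset_pair_eq hm with ⟨h1, h2⟩ | ⟨h1, h2⟩ <;> omega
    · rw [dVu n hns hn1, dVv n hns, dUu m hmr, dUv m hmr] at hm
      rcases multiset_pair_eq hm with ⟨h1, h2⟩ | ⟨h1, h2⟩ <;> omega
    · rw [dVu n hns hn1, dVv n hns, dVu m hms hm1, dVv m hms] at hm
      rcases multiset_pair_eq hm with ⟨h1, _⟩ | ⟨h1, h2⟩ <;> rw [h1] <;> omega
  -- no singleton works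
  have hnosingle : ∀ w : V, ¬ IsOMR G {w} := by
    intro w hS
    have key : ∃ p q : V, p ≠ q ∧ p ≠ w ∧ q ≠ w ∧ G.dist p w = G.dist q w := by
      by_cases hwu : w = u0
      · subst hwu
        refine ⟨v0, v1, hnev01, hne01.symm, hne0v1.symm, ?_⟩
        have e1 : G.dist v0 u0 = 1 := SimpleGraph.dist_eq_one_iff_adj.mpr adj01.symm
        have e2 : G.dist v1 u0 = 1 := SimpleGraph.dist_eq_one_iff_adj.mpr adj0v1.symm
        omega
      · by_cases hwv : w = v0
        · subst hwv
          refine ⟨u0, v1, hne0v1, hne01, hnev01.symm, ?_⟩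
          have e1 : G.dist u0 v0 = 1 := SimpleGraph.dist_eq_one_iff_adj.mpr adj01
          have e2 : G.dist v1 v0 = 1 := by rw [← hVV1, SimpleGraph.dist_comm]
                                           rw [SimpleGraph.dist_comm]
                                           exact dVv 1 (by omega)
          omega
        · obtain ⟨n, hn1, hn⟩ := classify w hwu hwv
          rcases hn with ⟨hnr, rfl⟩ | ⟨hns, rfl⟩
          · rcases Nat.lt_or_ge (G.dist (UU n) v1) (n + 1) with hlt | hge
            · refine ⟨u0, v1, hne0v1, ?_, ?_, ?_⟩
              · rw [← hUU0]; intro he; have := hUUinj 0 (by omega) n hnr he; omega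
              · rw [← hVV1]; exact fun he => hUVne n hnr 1 (by omega) he.symm
              · have e1 : G.dist u0 (UU n) = n := by rw [SimpleGraph.dist_comm]; exact dUu n hnr
                have e2 := dUv1 n hnr hn1
                have e3 : G.dist v1 (UU n) = G.dist (UU n) v1 := SimpleGraph.dist_comm
                omega
            · refine ⟨v0, v1, hnev01, ?_, ?_, ?_⟩
              · rw [← hVV0]; exact fun he => hUVne n hnr 0 (by omega) he.symm
              · rw [← hVV1]; exact fun he => hUVne n hnr 1 (by omega) he.symm
              · have e1 : G.dist v0 (UU n) = n + 1 := by
                  rw [SimpleGraph.dist_comm]; exact dUv n hnr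
                have e2 := dUv1 n hnr hn1
                have e3 : G.dist v1 (UU n) = G.dist (UU n) v1 := SimpleGraph.dist_comm
                omega
          · refine ⟨u0, v0, hne01, ?_, ?_, ?_⟩
            · rw [← hUU0]; exact fun he => hUVne 0 (by omega) n hns he
            · rw [← hVV0]; intro he; have := hVVinj 0 (by omega) n hns he; omega
            · have e1 : G.dist u0 (VV n) = n := by
                rw [SimpleGraph.dist_comm]; exact dVu n hns hn1
              have e2 : G.dist v0 (VV n) = n := by
                rw [SimpleGraph.dist_comm]; exact dVv n hns
              omega
    obtain ⟨p, q, hpq, hpw, hqw, hd⟩ := key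
    apply hpq
    apply hS p (by simp [hpw]) q (by simp [hqw])
    rw [mrep_singleton, mrep_singleton, hd]
  -- conclude
  refine ⟨u0, v0, adj01, homrS, ?_⟩
  have hcard : ({u0, v0} : Finset V).card = 2 := Finset.card_pair hne01
  rw [hcard, dimMS]
  have h2P : (2 : ℕ) ∈ {n | ∃ S : Finset V, S.card = n ∧ IsOMR G S} :=
    ⟨{u0, v0}, hcard, homrS⟩
  refine le_antisymm ?_ (Nat.sInf_le h2P)
  refine le_csInf ⟨2, h2P⟩ ?_
  rintro n ⟨S, hScard, hS⟩
  by_contra hn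
  push_neg at hn
  interval_cases n
  · rw [Finset.card_eq_zero] at hScard
    subst hScard
    exact hnev01 (hS v0 (Finset.notMem_empty v0) v1 (Finset.notMem_empty v1) rfl)
  · rw [Finset.card_eq_one] at hScard
    obtain ⟨w, rfl⟩ := hScard
    exact hnosingle w hS


theorem stmt_10 (V : Type*) [Fintype V] [DecidableEq V] (G : SimpleGraph V)
    (hconn : G.Connected) :
    (∃ u v : V, G.Adj u v ∧ IsOMR G {u, v} ∧ ({u, v} : Finset V).card = dimMS G) ↔
      InFamilyF G := by
  constructor
  · rintro ⟨u, v, hadj, homr, hcard⟩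
    have hcard2 : ({u, v} : Finset V).card = 2 := Finset.card_pair hadj.ne
    have hdim : dimMS G = 2 := by rw [← hcard, hcard2]
    have hns : ∀ w : V, ¬ IsOMR G {w} := by
      intro w hw
      have h1 : (1 : ℕ) ∈ {n | ∃ S : Finset V, S.card = n ∧ IsOMR G S} :=
        ⟨{w}, Finset.card_singleton w, hw⟩
      have h2 := Nat.sInf_le h1
      rw [dimMS] at hdim
      omega
    by_cases hc : ∃ w : V, w ≠ v ∧ G.dist w u = G.dist w v + 1
    · obtain ⟨q, hq1, hq2⟩ := hc
      have hsk' : ∀ w : V, w ≠ u → G.dist w v ≠ G.dist w u + 1 := fun p hp hcon =>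
        absurd (orient hconn hadj homr hcon hp hq2 hq1) not_false
      have homr' : IsOMR G {v, u} := by rwa [Finset.pair_comm]
      exact forward_main hconn hadj.symm homr' hns hsk'
    · push_neg at hc
      exact forward_main hconn hadj homr hns hc
  · exact backward_main hconn
end

section
/- For all integers s ≥ t ≥ 2, no set of two vertices of the grid graph P_s □ P_t is an outer multiset resolving set; consequently dim_ms(P_s □ P_t) ≥ 3. -/
open SimpleGraph

/-!
In a box product `G □ H` of connected graphs distances add up coordinatewise.
For a pair `{a, b}`, the "swapped" vertices `u = (a₁, b₂)` and `v = (b₁, a₂)` satisfy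
`d(u, a) = d(v, b)` and `d(u, b) = d(v, a)`, so they have the same multiset representation;
when `a` and `b` share a coordinate, give `u` and `v` instead a common other value `c` there.
Sets of size at most one are handled by two distinct neighbours of the single vertex.
-/

section General

variable {V : Type*} (G : SimpleGraph V)

lemma not_isOMR_of_mrep_eq {S : Finset V} {u v : V} (hu : u ∉ S) (hv : v ∉ S) (huv : u ≠ v)
    (h : mrep G u S = mrep G v S) : ¬ IsOMR G S :=
  fun hS => huv (hS u hu v hv h)

lemma not_isOMR_empty [Nontrivial V] : ¬ IsOMR G ∅ := by
  obtain ⟨u, v, huv⟩ := exists_pair_ne V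
  exact not_isOMR_of_mrep_eq G (Finset.notMem_empty u) (Finset.notMem_empty v) huv rfl

lemma not_isOMR_singleton_of_adj {a u v : V} (hu : G.Adj a u) (hv : G.Adj a v) (huv : u ≠ v) :
    ¬ IsOMR G {a} := by
  refine not_isOMR_of_mrep_eq G (u := u) (v := v) ?_ ?_ huv ?_
  · simpa using hu.ne'
  · simpa using hv.ne'
  · simp [mrep, dist_comm (u := u), dist_comm (u := v), dist_eq_one_iff_adj.mpr hu,
      dist_eq_one_iff_adj.mpr hv]

lemma not_isOMR_pair_of_dist_swap [DecidableEq V] {a b u v : V} (hab : a ≠ b)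
    (hu : u ∉ ({a, b} : Finset V)) (hv : v ∉ ({a, b} : Finset V)) (huv : u ≠ v)
    (hua : G.dist u a = G.dist v b) (hub : G.dist u b = G.dist v a) : ¬ IsOMR G {a, b} := by
  refine not_isOMR_of_mrep_eq G hu hv huv ?_
  simp only [mrep, Finset.insert_val_of_notMem (Finset.notMem_singleton.mpr hab),
    Finset.singleton_val, Multiset.map_cons, Multiset.map_singleton, hua, hub]
  exact Multiset.cons_swap _ _ _

lemma le_dimMS [Fintype V] {n : ℕ} (h : ∀ S : Finset V, IsOMR G S → n ≤ S.card) :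
    n ≤ dimMS G := by
  have huniv : IsOMR G Finset.univ := fun u hu => absurd (Finset.mem_univ u) hu
  refine le_csInf ⟨_, Finset.univ, rfl, huniv⟩ ?_
  rintro _ ⟨S, rfl, hS⟩
  exact h S hS

end General

section BoxProd

variable {α β : Type*} {G : SimpleGraph α} {H : SimpleGraph β}

lemma dist_boxProd (hG : G.Preconnected) (hH : H.Preconnected) (x y : α × β) :
    (G □ H).dist x y = G.dist x.1 y.1 + H.dist x.2 y.2 := by
  unfold SimpleGraph.dist
  rw [edist_boxProd, ENat.toNat_add (edist_ne_top_iff_reachable.mpr (hG _ _))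
    (edist_ne_top_iff_reachable.mpr (hH _ _))]

variable [Nontrivial α] [Nontrivial β]

lemma not_isOMR_boxProd_singleton (hG : G.Preconnected) (hH : H.Preconnected) (a : α × β) :
    ¬ IsOMR (G □ H) {a} := by
  obtain ⟨c, hc⟩ := hG.exists_adj_of_nontrivial a.1
  obtain ⟨d, hd⟩ := hH.exists_adj_of_nontrivial a.2
  refine not_isOMR_singleton_of_adj (G □ H) (u := (c, a.2)) (v := (a.1, d))
    (boxProd_adj.mpr (Or.inl ⟨hc, rfl⟩)) (boxProd_adj.mpr (Or.inr ⟨hd, rfl⟩)) ?_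
  simp [Prod.ext_iff, hc.ne']

lemma not_isOMR_boxProd_of_card_eq_two (hG : G.Preconnected) (hH : H.Preconnected)
    {S : Finset (α × β)} (hS : S.card = 2) : ¬ IsOMR (G □ H) S := by
  classical
  obtain ⟨⟨a₁, a₂⟩, ⟨b₁, b₂⟩, hab, rfl⟩ := Finset.card_eq_two.mp hS
  have hdist := dist_boxProd hG hH
  by_cases h₁ : a₁ = b₁
  · subst h₁
    have h₂ : a₂ ≠ b₂ := fun h => hab (by rw [h])
    obtain ⟨c, hc⟩ := exists_ne a₁
    refine not_isOMR_pair_of_dist_swap _ (u := (c, a₂)) (v := (c, b₂)) hab ?_ ?_ ?_ ?_ ?_ <;>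
      simp [hdist, hc, h₂, dist_comm (u := a₂)]
  by_cases h₂ : a₂ = b₂
  · subst h₂
    obtain ⟨c, hc⟩ := exists_ne a₂
    refine not_isOMR_pair_of_dist_swap _ (u := (a₁, c)) (v := (b₁, c)) hab ?_ ?_ ?_ ?_ ?_ <;>
      simp [hdist, hc, h₁, Ne.symm h₁, dist_comm (u := a₁)]
  refine not_isOMR_pair_of_dist_swap _ (u := (a₁, b₂)) (v := (b₁, a₂)) hab ?_ ?_ ?_ ?_ ?_ <;>
    simp [hdist, h₁, h₂, Ne.symm h₁, Ne.symm h₂, dist_comm (u := a₁), dist_comm (u := a₂)]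

lemma three_le_dimMS_boxProd [Fintype α] [Fintype β] (hG : G.Preconnected)
    (hH : H.Preconnected) : 3 ≤ dimMS (G □ H) := by
  refine le_dimMS _ fun S hS => ?_
  by_contra! hcard
  interval_cases h : S.card
  · exact not_isOMR_empty _ (Finset.card_eq_zero.mp h ▸ hS)
  · obtain ⟨a, rfl⟩ := Finset.card_eq_one.mp h
    exact not_isOMR_boxProd_singleton hG hH a hS
  · exact not_isOMR_boxProd_of_card_eq_two hG hH h hS

end BoxProd

theorem stmt_17 (s t : ℕ) (ht : 2 ≤ t) (hst : t ≤ s) :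
    (∀ S : Finset (Fin s × Fin t), S.card = 2 →
        ¬ IsOMR ((pathGraph s).boxProd (pathGraph t)) S) ∧
      3 ≤ dimMS ((pathGraph s).boxProd (pathGraph t)) := by
  have : Nontrivial (Fin t) := Fin.nontrivial_iff_two_le.mpr ht
  have : Nontrivial (Fin s) := Fin.nontrivial_iff_two_le.mpr (ht.trans hst)
  exact ⟨fun _ => not_isOMR_boxProd_of_card_eq_two (pathGraph_preconnected s)
      (pathGraph_preconnected t),
    three_le_dimMS_boxProd (pathGraph_preconnected s) (pathGraph_preconnected t)⟩
end

section
/- For all integers m, n ≥ 2 with mn ≥ 4 and m + n ≥ 5, the Cartesian product K_m □ K_n of two complete graphs satisfies dim_ms(K_m □ K_n) = mn − 1. -/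
/-!
In a regular graph of diameter at most two, a vertex `u ∉ S` sees each vertex of `S` at distance
one or two, so its multiset representation only records how many neighbours it has in `S`; by
regularity this is determined by its number of neighbours in `T = Sᶜ`. These are the degrees of
the subgraph induced on `T`, and no graph on at least two vertices has pairwise distinct degrees.
Hence every outer multiset resolving set misses at most one vertex, while any set missing at most
one vertex resolves trivially. `K_m □ K_n` is regular of diameter at most two.
-/

open SimpleGraph

open Finset

namespace SimpleGraph

variable {V : Type*} {G : SimpleGraph V}

section

variable [DecidableEq V] [DecidableRel G.Adj]

/-- A vertex adjacent to all of `T` rules out an isolated one, so the `#T` values lie in a range of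
only `#T - 1` numbers. -/
lemma exists_ne_card_filter_adj_eq {T : Finset V} (hT : 2 ≤ #T) :
    ∃ u ∈ T, ∃ v ∈ T, u ≠ v ∧ #{w ∈ T | G.Adj u w} = #{w ∈ T | G.Adj v w} := by
  have hsub (u : V) : {w ∈ T | G.Adj u w} ⊆ T.erase u := fun w hw => by
    rw [mem_filter] at hw
    exact mem_erase.mpr ⟨hw.2.ne', hw.1⟩
  have hle (u : V) (hu : u ∈ T) : #{w ∈ T | G.Adj u w} ≤ #T - 1 :=
    (card_le_card (hsub u)).trans_eq (card_erase_of_mem hu)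
  by_cases hfull : ∃ v ∈ T, #{w ∈ T | G.Adj v w} = #T - 1
  · obtain ⟨v, hv, hvfull⟩ := hfull
    have hnbhd : {w ∈ T | G.Adj v w} = T.erase v :=
      eq_of_subset_of_card_le (hsub v) (by rw [card_erase_of_mem hv, hvfull])
    refine exists_ne_map_eq_of_card_lt_of_maps_to (s := T) (t := Icc 1 (#T - 1))
      (by rw [Nat.card_Icc]; omega) fun u hu => mem_Icc.mpr ⟨?_, hle u hu⟩
    rcases eq_or_ne u v with rfl | huv
    · omega
    · have hadj : G.Adj v u := (mem_filter.mp (hnbhd ▸ mem_erase.mpr ⟨huv, hu⟩)).2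
      exact card_pos.mpr ⟨v, mem_filter.mpr ⟨hv, hadj.symm⟩⟩
  · push Not at hfull
    refine exists_ne_map_eq_of_card_lt_of_maps_to (s := T) (t := range (#T - 1))
      (by rw [card_range]; omega) fun u hu => mem_range.mpr ?_
    exact lt_of_le_of_ne (hle u hu) (hfull u hu)

end

lemma dist_eq_two_of_ediam_le_two (hG : G.ediam ≤ 2) {u w : V} (hne : u ≠ w)
    (hadj : ¬ G.Adj u w) : G.dist u w = 2 := by
  have h2 : G.edist u w ≤ 2 := edist_le_ediam.trans hG
  have hr : G.Reachable u w := edist_ne_top_iff_reachable.mp (ne_top_of_le_ne_top (by simp) h2)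
  have hle : G.dist u w ≤ 2 := by exact_mod_cast hr.coe_dist_eq_edist ▸ h2
  have hpos : 0 < G.dist u w := hr.pos_dist_of_ne hne
  have h1 : G.dist u w ≠ 1 := dist_eq_one_iff_adj.not.mpr hadj
  omega

end SimpleGraph

section

variable {V : Type*} {G : SimpleGraph V} [DecidableRel G.Adj] {S : Finset V} {u v : V}

lemma mrep_eq_replicate (hG : G.ediam ≤ 2) (hu : u ∉ S) :
    mrep G u S = Multiset.replicate #{w ∈ S | G.Adj u w} 1
      + Multiset.replicate #{w ∈ S | ¬ G.Adj u w} 2 := by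
  rw [mrep, ← Multiset.filter_add_not (G.Adj u) S.val, Multiset.map_add]
  congr 1 <;> rw [Multiset.eq_replicate, Multiset.card_map] <;>
    refine ⟨rfl, fun k hk => ?_⟩ <;>
    obtain ⟨w, hw, rfl⟩ := Multiset.mem_map.mp hk <;>
    rw [Multiset.mem_filter] at hw
  · exact dist_eq_one_iff_adj.mpr hw.2
  · exact dist_eq_two_of_ediam_le_two hG (ne_of_mem_of_not_mem hw.1 hu).symm hw.2

lemma mrep_eq_mrep_of_card_filter_adj_eq (hG : G.ediam ≤ 2) (hu : u ∉ S) (hv : v ∉ S)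
    (h : #{w ∈ S | G.Adj u w} = #{w ∈ S | G.Adj v w}) : mrep G u S = mrep G v S := by
  have hu' := card_filter_add_card_filter_not (s := S) (fun w => G.Adj u w)
  have hv' := card_filter_add_card_filter_not (s := S) (fun w => G.Adj v w)
  rw [mrep_eq_replicate hG hu, mrep_eq_replicate hG hv, h]
  congr 2
  omega

variable [Fintype V] [DecidableEq V] [G.LocallyFinite]

lemma card_filter_adj_add_card_filter_adj_compl (S : Finset V) (u : V) :
    #{w ∈ S | G.Adj u w} + #{w ∈ Sᶜ | G.Adj u w} = G.degree u := by
  have hnbhd : G.neighborFinset u = ({w | G.Adj u w} : Finset V) := by ext; simp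
  rw [← card_neighborFinset_eq_degree, hnbhd,
    ← card_union_of_disjoint (disjoint_filter_filter disjoint_compl_right), ← filter_union,
    union_compl]

lemma not_isOMR_of_two_le_card_compl {d : ℕ} (hreg : G.IsRegularOfDegree d) (hG : G.ediam ≤ 2)
    (hS : 2 ≤ #Sᶜ) : ¬ IsOMR G S := by
  intro hOMR
  obtain ⟨u, hu, v, hv, huv, hcard⟩ := exists_ne_card_filter_adj_eq (G := G) hS
  rw [mem_compl] at hu hv
  refine huv (hOMR u hu v hv (mrep_eq_mrep_of_card_filter_adj_eq hG hu hv ?_))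
  have hu' := card_filter_adj_add_card_filter_adj_compl (G := G) S u
  have hv' := card_filter_adj_add_card_filter_adj_compl (G := G) S v
  rw [hreg.degree_eq] at hu' hv'
  omega

lemma card_sub_one_le_card_of_isOMR {d : ℕ} (hreg : G.IsRegularOfDegree d) (hG : G.ediam ≤ 2)
    (hS : IsOMR G S) : Fintype.card V - 1 ≤ #S := by
  by_contra! hlt
  exact not_isOMR_of_two_le_card_compl hreg hG (by rw [card_compl]; omega) hS

end

lemma isOMR_of_card_compl_le_one {V : Type*} [Fintype V] [DecidableEq V] (G : SimpleGraph V)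
    {S : Finset V} (hS : #Sᶜ ≤ 1) : IsOMR G S :=
  fun u hu v hv _ => card_le_one.mp hS u (mem_compl.mpr hu) v (mem_compl.mpr hv)

lemma exists_isOMR_card_eq_card_sub_one {V : Type*} [Fintype V] (G : SimpleGraph V) :
    ∃ S : Finset V, #S = Fintype.card V - 1 ∧ IsOMR G S := by
  classical
  obtain ⟨S, -, hS⟩ :=
    exists_subset_card_eq (s := (univ : Finset V)) (n := Fintype.card V - 1) (by simp)
  exact ⟨S, hS, isOMR_of_card_compl_le_one G (by rw [card_compl, hS]; omega)⟩

theorem dimMS_eq_card_sub_one {V : Type*} [Fintype V] [DecidableEq V] {G : SimpleGraph V}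
    [DecidableRel G.Adj] [G.LocallyFinite] {d : ℕ} (hreg : G.IsRegularOfDegree d)
    (hG : G.ediam ≤ 2) : dimMS G = Fintype.card V - 1 := by
  have hmem := exists_isOMR_card_eq_card_sub_one G
  refine le_antisymm (Nat.sInf_le hmem) (le_csInf ⟨_, hmem⟩ ?_)
  rintro _ ⟨S, rfl, hS⟩
  exact card_sub_one_le_card_of_isOMR hreg hG hS

namespace SimpleGraph

variable {α β : Type*}

lemma ediam_top_le_one : (⊤ : SimpleGraph α).ediam ≤ 1 := by
  classical
  refine ediam_le_iff.mpr fun u v => ?_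
  rw [edist_top]
  split_ifs <;> simp

lemma ediam_boxProd_le (G : SimpleGraph α) (H : SimpleGraph β) :
    (G □ H).ediam ≤ G.ediam + H.ediam :=
  ediam_le_iff.mpr fun x y => edist_boxProd x y ▸ add_le_add edist_le_ediam edist_le_ediam

lemma IsRegularOfDegree.boxProd {G : SimpleGraph α} {H : SimpleGraph β} [G.LocallyFinite]
    [H.LocallyFinite] [(G □ H).LocallyFinite] {d e : ℕ} (hG : G.IsRegularOfDegree d)
    (hH : H.IsRegularOfDegree e) : (G □ H).IsRegularOfDegree (d + e) := fun x => by
  rw [degree_boxProd, hG.degree_eq, hH.degree_eq]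

end SimpleGraph

theorem stmt_19_general (m n : ℕ) :
    dimMS ((⊤ : SimpleGraph (Fin m)).boxProd (⊤ : SimpleGraph (Fin n))) = m * n - 1 := by
  classical
  have hreg := (IsRegularOfDegree.top (V := Fin m)).boxProd (IsRegularOfDegree.top (V := Fin n))
  have hdiam : ((⊤ : SimpleGraph (Fin m)) □ (⊤ : SimpleGraph (Fin n))).ediam ≤ 2 :=
    calc _ ≤ (⊤ : SimpleGraph (Fin m)).ediam + (⊤ : SimpleGraph (Fin n)).ediam :=
          ediam_boxProd_le _ _
      _ ≤ 1 + 1 := add_le_add ediam_top_le_one ediam_top_le_one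
      _ = 2 := one_add_one_eq_two
  rw [dimMS_eq_card_sub_one hreg hdiam, Fintype.card_prod, Fintype.card_fin, Fintype.card_fin]

theorem stmt_19 (m n : ℕ) (hm : 2 ≤ m) (hn : 2 ≤ n) (hmn4 : 4 ≤ m * n)
    (hmn5 : 5 ≤ m + n) :
    dimMS ((⊤ : SimpleGraph (Fin m)).boxProd (⊤ : SimpleGraph (Fin n))) = m * n - 1 :=
  stmt_19_general m n
end
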